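/- Let d ∈ ℕ, let λ : ℝᵈ → ℝᵈ be a linear map, let γ > 0 and C ∈ ℝ, and let f : ℝᵈ → ℝ be convex with f(w) ≤ C + (γ/2)·‖λw‖² for all w ∈ ℝᵈ. Then for every θ ∈ (0,1) and all z, z' ∈ ℝᵈ: f(z) − θ·f(z') ≤ (1 − θ)·C + (γ/(2(1 − θ)))·‖λ(z − θ • z')‖². -/

import Mathlib

/-! Write `z = θ z' + (1 - θ) u` with `u = (1 - θ)⁻¹ (z - θ z')`. Convexity gives
`f z - θ f z' ≤ (1 - θ) f u`, and the growth bound at `u` turns `(1 - θ) ‖λ u‖²` into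
`‖λ (z - θ z')‖² / (1 - θ)`. -/

theorem ConvexOn.sub_mul_le_mul_inv_smul_sub {𝕜 E : Type*} [Field 𝕜] [LinearOrder 𝕜]
    [IsStrictOrderedRing 𝕜] [AddCommGroup E] [Module 𝕜 E] {f : E → 𝕜}
    (hf : ConvexOn 𝕜 Set.univ f) {θ : 𝕜} (hθ0 : 0 ≤ θ) (hθ1 : θ < 1) (z z' : E) :
    f z - θ * f z' ≤ (1 - θ) * f ((1 - θ)⁻¹ • (z - θ • z')) := by
  have h1θ : (1 - θ) ≠ 0 := (sub_pos.2 hθ1).ne'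
  have hz : θ • z' + (1 - θ) • (1 - θ)⁻¹ • (z - θ • z') = z := by
    rw [smul_smul, mul_inv_cancel₀ h1θ, one_smul, add_sub_cancel]
  have hconv := hf.2 (Set.mem_univ z') (Set.mem_univ ((1 - θ)⁻¹ • (z - θ • z'))) hθ0
    (sub_pos.2 hθ1).le (add_sub_cancel θ 1)
  rw [hz, smul_eq_mul, smul_eq_mul] at hconv
  linarith

theorem stmt_8_general (d : ℕ)
    (lam : EuclideanSpace ℝ (Fin d) →ₗ[ℝ] EuclideanSpace ℝ (Fin d))
    (γ C : ℝ)
    (f : EuclideanSpace ℝ (Fin d) → ℝ) (hf : ConvexOn ℝ Set.univ f)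
    (hgrowth : ∀ w : EuclideanSpace ℝ (Fin d), f w ≤ C + γ / 2 * ‖lam w‖ ^ 2) :
    ∀ θ : ℝ, θ ∈ Set.Ioo (0 : ℝ) 1 →
    ∀ z z' : EuclideanSpace ℝ (Fin d),
      f z - θ * f z' ≤ (1 - θ) * C + γ / (2 * (1 - θ)) * ‖lam (z - θ • z')‖ ^ 2 := by
  rintro θ ⟨hθ0, hθ1⟩ z z'
  have h1θ : 0 < 1 - θ := sub_pos.2 hθ1
  calc f z - θ * f z' ≤ (1 - θ) * f ((1 - θ)⁻¹ • (z - θ • z')) :=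
        hf.sub_mul_le_mul_inv_smul_sub hθ0.le hθ1 z z'
    _ ≤ (1 - θ) * (C + γ / 2 * ‖lam ((1 - θ)⁻¹ • (z - θ • z'))‖ ^ 2) :=
        mul_le_mul_of_nonneg_left (hgrowth _) h1θ.le
    _ = (1 - θ) * C + γ / (2 * (1 - θ)) * ‖lam (z - θ • z')‖ ^ 2 := by
        rw [map_smul, norm_smul, Real.norm_of_nonneg (inv_nonneg.2 h1θ.le)]
        field_simp

/-- θ-difference lemma combined with quadratic growth: for convex `f` with
`f(w) ≤ C + (γ/2)‖λw‖²`, one has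
`f(z) - θ f(z') ≤ (1 - θ)C + (γ/(2(1 - θ)))‖λ(z - θz')‖²`. -/
theorem stmt_8 (d : ℕ)
    (lam : EuclideanSpace ℝ (Fin d) →ₗ[ℝ] EuclideanSpace ℝ (Fin d))
    (γ C : ℝ) (hγ : 0 < γ)
    (f : EuclideanSpace ℝ (Fin d) → ℝ) (hf : ConvexOn ℝ Set.univ f)
    (hgrowth : ∀ w : EuclideanSpace ℝ (Fin d), f w ≤ C + γ / 2 * ‖lam w‖ ^ 2) :
    ∀ θ : ℝ, θ ∈ Set.Ioo (0 : ℝ) 1 →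
    ∀ z z' : EuclideanSpace ℝ (Fin d),
      f z - θ * f z' ≤ (1 - θ) * C + γ / (2 * (1 - θ)) * ‖lam (z - θ • z')‖ ^ 2 :=
  stmt_8_general d lam γ C f hf hgrowth
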